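/- Proposition 2 (the split maximizing the mi score occurs at the coordinate of a point within a bin; interval form): suppose the fixed observed counts satisfy (o_+, o_−) ≠ (0, 0). Then for all real numbers a, b, c with l_s < a < c < b < u_s, the mi-score change satisfies δ_mi(c) < max(δ_mi(a), δ_mi(b)). Consequently, on any closed subinterval of (l_s, u_s) between consecutive observation coordinates (where o_+ and o_− are constant), the maximum of δ_mi is attained at an endpoint of the subinterval, so the split maximizing the mi score must occur at the coordinate of a point within the bin. -/

import Mathlib

/-- The mi score of a bin with observed count `o` and expected count `e`,
for total sample size `n`: `mi(o, e) = (o/n)·log(o/e)`.  The convention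
`0·log 0 = 0` holds automatically since `Real.log 0 = 0`. -/
noncomputable def miScore (n o e : ℝ) : ℝ := (o / n) * Real.log (o / e)

/-- The change in total mi score due to a vertical split of the bin
`(ls, us] × (lt, ut]` at coordinate `c`, with fixed observed counts `op`
above and `om` below the split, and total sample size `n`. -/
noncomputable def deltaMi (ls us lt ut n op om : ℝ) (c : ℝ) : ℝ :=
  miScore n op ((us - c) * (ut - lt) / n) +
  miScore n om ((c - ls) * (ut - lt) / n) -
  miScore n (op + om) ((us - ls) * (ut - lt) / n)

/-!
On `(ls, us)` the split score is `δ(c) = -(op/n) log (us - c) - (om/n) log (c - ls) + const`,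
since the total expected count of the bin does not depend on `c`. Both weights are nonnegative
and one is positive, so `δ` is strictly convex there, and a strictly convex function is strictly
below the larger of its values at the ends of any segment containing `c` in its interior.
-/

open Set Real

section

variable {𝕜 E F β : Type*} [Ring 𝕜] [PartialOrder 𝕜] [AddCommGroup E] [AddCommGroup F]
  [Module 𝕜 E] [Module 𝕜 F] [AddCommMonoid β] [PartialOrder β] [SMul 𝕜 β]

theorem StrictConvexOn.comp_affineMap {f : F → β} {g : E →ᵃ[𝕜] F} (hg : Function.Injective g)
    {s : Set F} (hf : StrictConvexOn 𝕜 s f) : StrictConvexOn 𝕜 (g ⁻¹' s) (f ∘ g) :=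
  ⟨hf.1.affine_preimage g, fun x hx y hy hxy a b ha hb hab => by
    simpa only [Function.comp_apply, Convex.combo_affine_apply hab] using
      hf.2 hx hy (hg.ne hxy) ha hb hab⟩

end

section

variable {𝕜 E β : Type*} [CommSemiring 𝕜] [PartialOrder 𝕜] [AddCommMonoid E] [SMul 𝕜 E]
  [AddCommMonoid β] [PartialOrder β] [Module 𝕜 β] [PosSMulStrictMono 𝕜 β]

theorem StrictConvexOn.smul {s : Set E} {f : E → β} {c : 𝕜} (hc : 0 < c)
    (hf : StrictConvexOn 𝕜 s f) : StrictConvexOn 𝕜 s fun x => c • f x :=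
  ⟨hf.1, fun x hx y hy hxy a b ha hb hab =>
    calc
      c • f (a • x + b • y) < c • (a • f x + b • f y) :=
        smul_lt_smul_of_pos_left (hf.2 hx hy hxy ha hb hab) hc
      _ = a • c • f x + b • c • f y := by rw [smul_add, smul_comm c, smul_comm c]⟩

end

theorem strictConvexOn_neg_log_sub_left (u : ℝ) :
    StrictConvexOn ℝ (Iio u) fun x => -log (u - x) := by
  have h := strictConcaveOn_log_Ioi.neg.comp_affineMap
    (g := AffineMap.const ℝ ℝ u - AffineMap.id ℝ ℝ) fun x y h => by simpa using h
  have hs : ⇑(AffineMap.const ℝ ℝ u - AffineMap.id ℝ ℝ) ⁻¹' Ioi 0 = Iio u := by ext; simp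
  exact hs ▸ h

theorem strictConvexOn_neg_log_sub_right (l : ℝ) :
    StrictConvexOn ℝ (Ioi l) fun x => -log (x - l) := by
  have h := strictConcaveOn_log_Ioi.neg.comp_affineMap
    (g := AffineMap.id ℝ ℝ - AffineMap.const ℝ ℝ l) fun x y h => by simpa using h
  have hs : ⇑(AffineMap.id ℝ ℝ - AffineMap.const ℝ ℝ l) ⁻¹' Ioi 0 = Ioi l := by ext; simp
  exact hs ▸ h

theorem strictConvexOn_neg_mul_log_sub_add_mul_log_sub {p q l u : ℝ} (hp : 0 ≤ p) (hq : 0 ≤ q)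
    (hpq : 0 < p ∨ 0 < q) :
    StrictConvexOn ℝ (Ioo l u) fun x => -(p * log (u - x) + q * log (x - l)) := by
  have hu := (strictConvexOn_neg_log_sub_left u).subset Ioo_subset_Iio_self (convex_Ioo l u)
  have hl := (strictConvexOn_neg_log_sub_right l).subset Ioo_subset_Ioi_self (convex_Ioo l u)
  have hsum : StrictConvexOn ℝ (Ioo l u) fun x => p • -log (u - x) + q • -log (x - l) := by
    rcases hpq with hp' | hq'
    · exact (hu.smul hp').add_convexOn (hl.convexOn.smul hq)
    · exact (hu.convexOn.smul hp).add_strictConvexOn (hl.smul hq')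
  exact hsum.congr fun x _ => by simp only [smul_eq_mul]; ring

theorem miScore_mul_left (n o : ℝ) {x e : ℝ} (hx : x ≠ 0) (he : e ≠ 0) :
    miScore n o (x * e) = miScore n o e - o / n * log x := by
  rcases eq_or_ne o 0 with rfl | ho
  · simp [miScore]
  · rw [miScore, miScore, mul_comm x, ← div_div, log_div (div_ne_zero ho he) hx]
    ring

theorem deltaMi_eqOn (ls us lt ut n op om : ℝ) (hlt : lt ≠ ut) (hn : n ≠ 0) :
    EqOn (deltaMi ls us lt ut n op om)
      (fun x => -(op / n * log (us - x) + om / n * log (x - ls)) +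
        (miScore n op ((ut - lt) / n) + miScore n om ((ut - lt) / n) -
          miScore n (op + om) ((us - ls) * (ut - lt) / n)))
      (Ioo ls us) := by
  intro x ⟨hlx, hxu⟩
  have hw : (ut - lt) / n ≠ 0 := div_ne_zero (sub_ne_zero.2 hlt.symm) hn
  simp only [deltaMi, mul_div_assoc]
  rw [miScore_mul_left n op (sub_ne_zero.2 hxu.ne') hw,
    miScore_mul_left n om (sub_ne_zero.2 hlx.ne') hw]
  ring

theorem strictConvexOn_deltaMi (ls us lt ut n op om : ℝ) (hlt : lt < ut) (hn : 0 < n)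
    (hop : 0 ≤ op) (hom : 0 ≤ om) (hne : ¬(op = 0 ∧ om = 0)) :
    StrictConvexOn ℝ (Ioo ls us) (deltaMi ls us lt ut n op om) := by
  have hpos : 0 < op / n ∨ 0 < om / n := (not_and_or.1 hne).imp
    (fun h => div_pos (hop.lt_of_ne' h) hn) (fun h => div_pos (hom.lt_of_ne' h) hn)
  exact ((strictConvexOn_neg_mul_log_sub_add_mul_log_sub (div_nonneg hop hn.le)
    (div_nonneg hom hn.le) hpos).add_const _).congr
    (deltaMi_eqOn ls us lt ut n op om hlt.ne hn.ne').symm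

theorem mi_split_max_at_point_general (ls us lt ut n op om : ℝ)
    (hlt : lt < ut) (hn : 0 < n)
    (hop : 0 ≤ op) (hom : 0 ≤ om) (hne : ¬(op = 0 ∧ om = 0)) :
    ∀ a b c : ℝ, ls < a → a < c → c < b → b < us →
      deltaMi ls us lt ut n op om c <
        max (deltaMi ls us lt ut n op om a) (deltaMi ls us lt ut n op om b) := by
  intro a b c hla hac hcb hbu
  have hab : a < b := hac.trans hcb
  refine (strictConvexOn_deltaMi ls us lt ut n op om hlt hn hop hom hne).lt_on_openSegment
    ⟨hla, hab.trans hbu⟩ ⟨hla.trans hab, hbu⟩ hab.ne ?_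
  rw [openSegment_eq_Ioo hab]
  exact ⟨hac, hcb⟩

/-- Proposition 2 (interval form): if `(op, om) ≠ (0, 0)`, then for any
`ls < a < c < b < us` the mi-score change at `c` is strictly less than the
maximum of the changes at `a` and `b`; hence on any closed subinterval between
consecutive observation coordinates the maximum is attained at an endpoint. -/
theorem mi_split_max_at_point (ls us lt ut n op om : ℝ)
    (hlu : ls < us) (hlt : lt < ut) (hn : 0 < n)
    (hop : 0 ≤ op) (hom : 0 ≤ om) (hne : ¬(op = 0 ∧ om = 0)) :
    ∀ a b c : ℝ, ls < a → a < c → c < b → b < us →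
      deltaMi ls us lt ut n op om c <
        max (deltaMi ls us lt ut n op om a) (deltaMi ls us lt ut n op om b) :=
  mi_split_max_at_point_general ls us lt ut n op om hlt hn hop hom hne
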